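/- Let q = 6 + 2√5, σ = (1/√q)·[[1, q−1],[1, −1]] and τ = [[1, 0],[0, −1]]. Then the ring R_{6+2√5} = { f ∈ ℂ[x,y] : f^σ = f and f^τ = f } of polynomials invariant under both σ and τ equals the ℂ-subalgebra of ℂ[x,y] generated by W_{2,q}(x,y) = x² + (5+2√5)y² and ψ₅(x,y) = x⁵ − (50+20√5)x³y² + (225+100√5)xy⁴. -/

import Mathlib

/-! In the coordinates `u = x + ι y`, `v = x - ι y` with `ι = i √(q - 1)`, the matrix `τ` swaps
`u` and `v`, and `σ` becomes `(u, v) ↦ (ζ v, ζ⁻¹ u)` with `ζ = (1 + ι) / √q`. Since `√q = 1 + √5`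
and `(1 + ι)⁵ = (1 + √5)⁵`, `ζ` is a primitive fifth root of unity, so `σ` and `τ` generate a
dihedral group of order 10. Its invariants are spanned by the sums `uᵃvᵇ + uᵇvᵃ` with
`a ≡ b [MOD 5]`, which equal `(uv)ᵃ (u⁵ᵏ + v⁵ᵏ)`; by the recurrence for power sums these lie in
`ℂ[uv, u⁵ + v⁵]`. Finally `uv = W_{2,q}` and `u⁵ + v⁵ = 2 ψ₅`. -/

noncomputable section

abbrev Cxy : Type := MvPolynomial (Fin 2) ℂ

def qval : ℝ := 6 + 2 * Real.sqrt 5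

def sigmaMat : Matrix (Fin 2) (Fin 2) ℝ :=
  (Real.sqrt qval)⁻¹ • !![1, qval - 1; 1, -1]

def tauMat : Matrix (Fin 2) (Fin 2) ℝ := !![1, 0; 0, -1]

/-- The action `f^M(x,y) = f(ax+by, cx+dy)` of a 2×2 real matrix on ℂ[x,y]. -/
def act (M : Matrix (Fin 2) (Fin 2) ℝ) (f : Cxy) : Cxy :=
  MvPolynomial.aeval
    ![MvPolynomial.C ((M 0 0 : ℂ)) * MvPolynomial.X 0 + MvPolynomial.C ((M 0 1 : ℂ)) * MvPolynomial.X 1,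
      MvPolynomial.C ((M 1 0 : ℂ)) * MvPolynomial.X 0 + MvPolynomial.C ((M 1 1 : ℂ)) * MvPolynomial.X 1] f

def sqrt5C : ℂ := (Real.sqrt 5 : ℝ)

def W2q : Cxy :=
  MvPolynomial.X 0 ^ 2 + MvPolynomial.C (5 + 2 * sqrt5C) * MvPolynomial.X 1 ^ 2

def psi5 : Cxy :=
  MvPolynomial.X 0 ^ 5
    - MvPolynomial.C (50 + 20 * sqrt5C) * MvPolynomial.X 0 ^ 3 * MvPolynomial.X 1 ^ 2
    + MvPolynomial.C (225 + 100 * sqrt5C) * MvPolynomial.X 0 * MvPolynomial.X 1 ^ 4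

open MvPolynomial

theorem pow_add_pow_mem_of_mul_mem_of_add_mem {A S : Type*} [CommRing A] [SetLike S A]
    [SubringClass S A] {s : S} {x y : A} (hmul : x * y ∈ s) (hadd : x + y ∈ s) (k : ℕ) :
    x ^ k + y ^ k ∈ s := by
  induction k using Nat.twoStepInduction with
  | zero => simpa only [pow_zero] using add_mem (one_mem s) (one_mem s)
  | one => simpa only [pow_one] using hadd
  | more k ih ih' =>
    have recurrence : x ^ (k + 2) + y ^ (k + 2)
        = (x + y) * (x ^ (k + 1) + y ^ (k + 1)) - x * y * (x ^ k + y ^ k) := by ring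
    rw [recurrence]
    exact sub_mem (mul_mem hadd ih') (mul_mem hmul ih)

lemma Algebra.adjoin_pair_smul_right {R A : Type*} [CommSemiring R] [Semiring A] [Algebra R A]
    (a b : A) {c : R} (hc : IsUnit c) : adjoin R {a, c • b} = adjoin R {a, b} := by
  refine le_antisymm (adjoin_le ?_) (adjoin_le ?_) <;> rintro x (rfl | rfl)
  · exact subset_adjoin (by simp)
  · exact Subalgebra.smul_mem _ (subset_adjoin (by simp)) c
  · exact subset_adjoin (by simp)
  · have hcx : c • x ∈ adjoin R {a, c • x} := subset_adjoin (by simp)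
    simpa only [smul_smul, hc.val_inv_mul, one_smul, SetLike.mem_coe] using
      Subalgebra.smul_mem _ hcx (hc.unit⁻¹ : Rˣ).val

section TwoVariables

open Algebra

variable {R : Type*}

section CommSemiring

variable [CommSemiring R]

def diagScale (a b : R) : MvPolynomial (Fin 2) R →ₐ[R] MvPolynomial (Fin 2) R :=
  aeval ![C a * X 0, C b * X 1]

def swapVars : MvPolynomial (Fin 2) R →ₐ[R] MvPolynomial (Fin 2) R :=
  rename (Equiv.swap 0 1)

lemma monomial_eq_C_mul_X_pow_mul_X_pow (m : Fin 2 →₀ ℕ) (c : R) :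
    monomial m c = C c * X 0 ^ m 0 * X 1 ^ m 1 := by
  rw [monomial_eq, Finsupp.prod_fintype _ _ fun _ => pow_zero _, Fin.prod_univ_two, mul_assoc]

lemma diagScale_monomial (a b : R) (m : Fin 2 →₀ ℕ) (c : R) :
    diagScale a b (monomial m c) = monomial m (a ^ m 0 * b ^ m 1 * c) := by
  simp only [monomial_eq_C_mul_X_pow_mul_X_pow, diagScale, map_mul, map_pow, aeval_X, aeval_C,
    algebraMap_eq, Matrix.cons_val_zero, Matrix.cons_val_one, mul_pow]
  ring

lemma coeff_diagScale (a b : R) (f : MvPolynomial (Fin 2) R) (m : Fin 2 →₀ ℕ) :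
    coeff m (diagScale a b f) = a ^ m 0 * b ^ m 1 * coeff m f := by
  induction f using MvPolynomial.induction_on' with
  | monomial d c =>
    rw [diagScale_monomial, coeff_monomial, coeff_monomial]
    split_ifs with h
    · rw [h]
    · rw [mul_zero]
  | add p q hp hq => rw [map_add, coeff_add, coeff_add, hp, hq, mul_add]

lemma swapVars_monomial (m : Fin 2 →₀ ℕ) (c : R) :
    swapVars (monomial m c) = C c * X 0 ^ m 1 * X 1 ^ m 0 := by
  simp only [swapVars, monomial_eq_C_mul_X_pow_mul_X_pow, map_mul, map_pow, rename_C, rename_X,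
    Equiv.swap_apply_left, Equiv.swap_apply_right]
  ring

lemma swapVars_swapVars (f : MvPolynomial (Fin 2) R) : swapVars (swapVars f) = f := by
  rw [swapVars, rename_rename, Function.Involutive.comp_self (Equiv.swap_apply_self 0 1),
    rename_id_apply]

end CommSemiring

variable {n : ℕ}

local notation "𝒜" n:max => adjoin R {(X 0 * X 1 : MvPolynomial (Fin 2) R), X 0 ^ n + X 1 ^ n}

section CommRing

variable [CommRing R]

lemma X_pow_mul_X_pow_add_mem_adjoin {a b : ℕ} (hab : a ≡ b [MOD n]) :
    X 0 ^ a * X 1 ^ b + X 0 ^ b * X 1 ^ a ∈ 𝒜 n := by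
  wlog hle : a ≤ b generalizing a b
  · simpa only [add_comm] using this hab.symm (le_of_not_ge hle)
  obtain ⟨k, hk⟩ := (Nat.modEq_iff_dvd' hle).1 hab
  have hxy : (X 0 * X 1 : MvPolynomial (Fin 2) R) ∈ 𝒜 n := subset_adjoin (by simp)
  have hpow : X 0 ^ n + X 1 ^ n ∈ 𝒜 n := subset_adjoin (by simp)
  have factor : (X 0 ^ a * X 1 ^ b + X 0 ^ b * X 1 ^ a : MvPolynomial (Fin 2) R)
      = (X 0 * X 1) ^ a * ((X 0 ^ n) ^ k + (X 1 ^ n) ^ k) := by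
    rw [show b = a + n * k by omega]
    ring
  rw [factor]
  refine mul_mem (pow_mem hxy a) (pow_add_pow_mem_of_mul_mem_of_add_mem ?_ hpow k)
  simpa only [mul_pow] using pow_mem hxy n

lemma add_swapVars_mem_adjoin {f : MvPolynomial (Fin 2) R}
    (hf : ∀ m ∈ f.support, m 0 ≡ m 1 [MOD n]) : f + swapVars f ∈ 𝒜 n := by
  rw [f.as_sum, map_sum, ← Finset.sum_add_distrib]
  refine Subalgebra.sum_mem _ fun m hm => ?_
  have pair : monomial m (coeff m f) + swapVars (monomial m (coeff m f))
      = C (coeff m f) * (X 0 ^ m 0 * X 1 ^ m 1 + X 0 ^ m 1 * X 1 ^ m 0) := by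
    rw [swapVars_monomial, monomial_eq_C_mul_X_pow_mul_X_pow]
    ring
  rw [pair]
  exact mul_mem (Subalgebra.algebraMap_mem _ _) (X_pow_mul_X_pow_add_mem_adjoin (hf m hm))

end CommRing

section Field

variable [Field R]

lemma modEq_of_mem_support {ζ : R} (hζ : IsPrimitiveRoot ζ n) (hn : n ≠ 0)
    {f : MvPolynomial (Fin 2) R} (hf : diagScale ζ ζ⁻¹ f = f) {m : Fin 2 →₀ ℕ}
    (hm : m ∈ f.support) : m 0 ≡ m 1 [MOD n] := by
  have hcoeff := coeff_diagScale ζ ζ⁻¹ f m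
  rw [hf] at hcoeff
  have hunit : ζ ^ m 0 * ζ⁻¹ ^ m 1 = 1 :=
    (mul_eq_right₀ (mem_support_iff.1 hm)).1 hcoeff.symm
  have hzpow : ζ ^ ((m 0 : ℤ) - m 1) = 1 := by
    rw [zpow_sub₀ (hζ.ne_zero hn), zpow_natCast, zpow_natCast, ← hunit, inv_pow, div_eq_mul_inv]
  exact (Nat.modEq_iff_dvd.2 ((hζ.zpow_eq_one_iff_dvd _).1 hzpow)).symm

theorem mem_adjoin_iff_dihedral_invariant {ζ : R} (hζ : IsPrimitiveRoot ζ n) (hn : n ≠ 0)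
    (h2 : (2 : R) ≠ 0) (f : MvPolynomial (Fin 2) R) :
    f ∈ 𝒜 n ↔ diagScale ζ ζ⁻¹ f = f ∧ swapVars f = f := by
  constructor
  · intro hf
    have hζ0 : ζ ≠ 0 := hζ.ne_zero hn
    suffices 𝒜 n ≤ AlgHom.equalizer (diagScale ζ ζ⁻¹) (AlgHom.id R _) ⊓
        AlgHom.equalizer swapVars (AlgHom.id R _) from this hf
    refine adjoin_le ?_
    rintro g (rfl | rfl) <;> refine ⟨?_, ?_⟩ <;>
      rw [SetLike.mem_coe, AlgHom.mem_equalizer, AlgHom.id_apply]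
    · simp only [diagScale, map_mul, aeval_X, Matrix.cons_val_zero, Matrix.cons_val_one]
      rw [mul_mul_mul_comm, ← C_mul, mul_inv_cancel₀ hζ0, C_1, one_mul]
    · simp only [swapVars, map_mul, rename_X, Equiv.swap_apply_left, Equiv.swap_apply_right]
      exact mul_comm _ _
    · simp only [diagScale, map_add, map_pow, aeval_X, Matrix.cons_val_zero, Matrix.cons_val_one,
        mul_pow, ← C_pow, inv_pow, hζ.pow_eq_one, inv_one, C_1, one_mul]
    · simp only [swapVars, map_add, map_pow, rename_X, Equiv.swap_apply_left,
        Equiv.swap_apply_right]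
      exact add_comm _ _
  · rintro ⟨hdiag, hswap⟩
    have half : f = (2⁻¹ : R) • (f + swapVars f) := by
      rw [hswap, ← two_smul R f, smul_smul, inv_mul_cancel₀ h2, one_smul]
    rw [half]
    exact Subalgebra.smul_mem _
      (add_swapVars_mem_adjoin fun m hm => modEq_of_mem_support hζ hn hdiag hm) _

def addSubSubst (a : R) (ha : a ≠ 0) (h2 : (2 : R) ≠ 0) :
    MvPolynomial (Fin 2) R ≃ₐ[R] MvPolynomial (Fin 2) R :=
  have half : (C 2⁻¹ : MvPolynomial (Fin 2) R) * 2 = 1 := by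
    rw [← map_ofNat C 2, ← C_mul, inv_mul_cancel₀ h2, C_1]
  have half' : (C a : MvPolynomial (Fin 2) R) * C (2 * a)⁻¹ = C 2⁻¹ := by
    rw [← C_mul, mul_inv_rev, mul_inv_cancel_left₀ ha]
  AlgEquiv.ofAlgHom (aeval ![X 0 + C a * X 1, X 0 - C a * X 1])
    (aeval ![C 2⁻¹ * (X 0 + X 1), C (2 * a)⁻¹ * (X 0 - X 1)])
    (by
      refine algHom_ext fun i => ?_
      fin_cases i <;>
        simp only [AlgHom.comp_apply, AlgHom.id_apply, aeval_X, map_add, map_sub, map_mul,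
          aeval_C, algebraMap_eq, Matrix.cons_val_zero, Matrix.cons_val_one, Fin.zero_eta,
          Fin.mk_one, Fin.isValue, Matrix.cons_val_fin_one]
      · linear_combination X 0 * half
      · linear_combination X 1 * (2 * half' + half))
    (by
      refine algHom_ext fun i => ?_
      fin_cases i <;>
        simp only [AlgHom.comp_apply, AlgHom.id_apply, aeval_X, map_add, map_sub, map_mul,
          aeval_C, algebraMap_eq, Matrix.cons_val_zero, Matrix.cons_val_one, Fin.zero_eta,
          Fin.mk_one, Fin.isValue, Matrix.cons_val_fin_one]
      · linear_combination X 0 * half + (X 0 - X 1) * half'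
      · linear_combination X 1 * half + (X 1 - X 0) * half')

end Field

end TwoVariables

lemma sqrt5C_sq : sqrt5C ^ 2 = 5 := by
  rw [sqrt5C, ← Complex.ofReal_pow, Real.sq_sqrt (by norm_num)]
  norm_num

lemma one_lt_qval : 1 < qval := by
  rw [qval]
  linarith [Real.sqrt_nonneg 5]

lemma sqrt_qval : Real.sqrt qval = 1 + Real.sqrt 5 := by
  have h5 : Real.sqrt 5 ^ 2 = 5 := Real.sq_sqrt (by norm_num)
  rw [show qval = (1 + Real.sqrt 5) ^ 2 by rw [qval]; linear_combination -h5]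
  exact Real.sqrt_sq (by positivity)

def iotaQ : ℂ := Complex.I * Real.sqrt (qval - 1)

def invSqrtQ : ℂ := ((Real.sqrt qval : ℝ) : ℂ)⁻¹

def zeta5 : ℂ := invSqrtQ * (1 + iotaQ)

lemma iotaQ_sq : iotaQ ^ 2 = 1 - qval := by
  rw [iotaQ, mul_pow, Complex.I_sq, ← Complex.ofReal_pow,
    Real.sq_sqrt (sub_nonneg.2 one_lt_qval.le)]
  push_cast
  ring

lemma iotaQ_ne_zero : iotaQ ≠ 0 :=
  mul_ne_zero Complex.I_ne_zero
    (Complex.ofReal_ne_zero.2 (Real.sqrt_ne_zero'.2 (sub_pos.2 one_lt_qval)))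

lemma ofReal_qval : (qval : ℂ) = 6 + 2 * sqrt5C := by
  rw [qval, sqrt5C]
  push_cast
  ring

lemma iotaQ_sq' : iotaQ ^ 2 = -(5 + 2 * sqrt5C) := by
  rw [iotaQ_sq, ofReal_qval]
  ring

lemma invSqrtQ_mul : invSqrtQ * (1 + sqrt5C) = 1 := by
  rw [invSqrtQ, sqrt_qval, sqrt5C]
  push_cast
  exact inv_mul_cancel₀ (by exact_mod_cast (by positivity : (1 + Real.sqrt 5) ≠ 0))

lemma invSqrtQ_sq_mul : invSqrtQ ^ 2 * qval = 1 := by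
  rw [invSqrtQ, inv_pow, ← Complex.ofReal_pow, Real.sq_sqrt (by linarith [one_lt_qval])]
  exact inv_mul_cancel₀ (Complex.ofReal_ne_zero.2 (by linarith [one_lt_qval]))

lemma zeta5_inv : zeta5⁻¹ = invSqrtQ * (1 - iotaQ) :=
  inv_eq_of_mul_eq_one_right <| by
    rw [zeta5]
    linear_combination (-invSqrtQ ^ 2) * iotaQ_sq + invSqrtQ_sq_mul

lemma one_add_iotaQ_pow_five : (1 + iotaQ) ^ 5 = (1 + sqrt5C) ^ 5 := by
  -- both sides reduce to `176 + 80 √5`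
  linear_combination (10 + 10 * iotaQ + (5 + iotaQ) * (iotaQ ^ 2 - (5 + 2 * sqrt5C))) * iotaQ_sq'
    + (20 + 4 * iotaQ - (10 + 10 * sqrt5C + (5 + sqrt5C) * (sqrt5C ^ 2 + 5))) * sqrt5C_sq

lemma zeta5_pow_five : zeta5 ^ 5 = 1 :=
  calc zeta5 ^ 5 = invSqrtQ ^ 5 * (1 + iotaQ) ^ 5 := by rw [zeta5, mul_pow]
    _ = (invSqrtQ * (1 + sqrt5C)) ^ 5 := by rw [one_add_iotaQ_pow_five, mul_pow]
    _ = 1 := by rw [invSqrtQ_mul, one_pow]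

lemma zeta5_ne_one : zeta5 ≠ 1 := by
  have him : zeta5.im = (Real.sqrt qval)⁻¹ * Real.sqrt (qval - 1) := by
    simp [zeta5, invSqrtQ, iotaQ]
  have him_pos : 0 < zeta5.im := by
    rw [him]
    exact mul_pos (inv_pos.2 (Real.sqrt_pos.2 (by linarith [one_lt_qval])))
      (Real.sqrt_pos.2 (sub_pos.2 one_lt_qval))
  intro h
  simp [h] at him_pos

lemma isPrimitiveRoot_zeta5 : IsPrimitiveRoot zeta5 5 :=
  have := Fact.mk Nat.prime_five
  IsPrimitiveRoot.iff_orderOf.2 (orderOf_eq_prime zeta5_pow_five zeta5_ne_one)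

def uvSubst : Cxy ≃ₐ[ℂ] Cxy := addSubSubst iotaQ iotaQ_ne_zero two_ne_zero

lemma uvSubst_apply (f : Cxy) :
    uvSubst f = aeval ![X 0 + C iotaQ * X 1, X 0 - C iotaQ * X 1] f := rfl

lemma act_sigmaMat_uvSubst (f : Cxy) :
    act sigmaMat (uvSubst f) = uvSubst (swapVars (diagScale zeta5 zeta5⁻¹ f)) := by
  have hj : (C iotaQ : Cxy) ^ 2 = 1 - C (qval : ℂ) := by rw [← C_pow, iotaQ_sq, C_sub, C_1]
  rw [zeta5_inv, act, uvSubst_apply, uvSubst_apply, ← AlgHom.comp_apply swapVars,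
    ← AlgHom.comp_apply (aeval ![X 0 + C iotaQ * X 1, X 0 - C iotaQ * X 1]),
    ← AlgHom.comp_apply (aeval _)]
  refine DFunLike.congr_fun (F := Cxy →ₐ[ℂ] Cxy) ?_ f
  refine algHom_ext fun i => ?_
  fin_cases i <;>
    simp only [sigmaMat, zeta5, invSqrtQ, Matrix.smul_apply, Matrix.of_apply,
      Matrix.cons_val', Matrix.cons_val_zero, Matrix.cons_val_one, Matrix.cons_val_fin_one,
      smul_eq_mul, mul_one, mul_neg, Complex.ofReal_mul, Complex.ofReal_inv, Complex.ofReal_sub,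
      Complex.ofReal_one, Complex.ofReal_neg, C_neg, AlgHom.comp_apply,
      aeval_X, aeval_C, algebraMap_eq, map_add, map_sub, map_mul, swapVars, diagScale, rename_X,
      rename_C, map_one, Equiv.swap_apply_left, Equiv.swap_apply_right, Fin.zero_eta, Fin.mk_one,
      Fin.isValue]
  · linear_combination (C ((Real.sqrt qval : ℂ)⁻¹) * X 1) * hj
  · linear_combination (C ((Real.sqrt qval : ℂ)⁻¹) * X 1) * hj

lemma act_tauMat_uvSubst (f : Cxy) : act tauMat (uvSubst f) = uvSubst (swapVars f) := by
  rw [act, uvSubst_apply, uvSubst_apply,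
    ← AlgHom.comp_apply (aeval ![X 0 + C iotaQ * X 1, X 0 - C iotaQ * X 1]),
    ← AlgHom.comp_apply (aeval _)]
  refine DFunLike.congr_fun (F := Cxy →ₐ[ℂ] Cxy) ?_ f
  refine algHom_ext fun i => ?_
  fin_cases i <;>
    simp only [tauMat, Matrix.of_apply, Matrix.cons_val', Matrix.cons_val_zero,
      Matrix.cons_val_one, Matrix.cons_val_fin_one, Complex.ofReal_one, Complex.ofReal_zero,
      Complex.ofReal_neg, C_1, C_0, AlgHom.comp_apply, aeval_X, aeval_C, algebraMap_eq,
      map_add, map_sub, map_mul, map_neg, swapVars, rename_X, Equiv.swap_apply_left,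
      Equiv.swap_apply_right, Fin.zero_eta, Fin.mk_one, Fin.isValue] <;>
    ring

lemma uvSubst_X_mul_X : uvSubst (X 0 * X 1) = W2q := by
  have hj : (C iotaQ : Cxy) ^ 2 = -C (5 + 2 * sqrt5C) := by rw [← C_pow, iotaQ_sq', C_neg]
  simp only [uvSubst_apply, map_mul, aeval_X, Matrix.cons_val_zero, Matrix.cons_val_one,
    Matrix.cons_val_fin_one, W2q]
  linear_combination (-X 1 ^ 2 : Cxy) * hj

lemma uvSubst_X_pow_add_X_pow : uvSubst (X 0 ^ 5 + X 1 ^ 5) = (2 : ℂ) • psi5 := by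
  have hj : (C iotaQ : Cxy) ^ 2 = -(5 + 2 * C sqrt5C) := by
    rw [← C_pow, iotaQ_sq', map_neg, map_add, map_mul, map_ofNat C, map_ofNat C]
  have hr : (C sqrt5C : Cxy) ^ 2 = 5 := by rw [← C_pow, sqrt5C_sq, map_ofNat C]
  simp only [uvSubst_apply, map_add, map_pow, aeval_X, Matrix.cons_val_zero, Matrix.cons_val_one,
    Matrix.cons_val_fin_one, psi5, smul_eq_C_mul, map_mul, map_ofNat]
  linear_combination
    (20 * X 0 ^ 3 * X 1 ^ 2 + 10 * X 0 * X 1 ^ 4 * (C iotaQ ^ 2 - 5 - 2 * C sqrt5C)) * hj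
      + 40 * X 0 * X 1 ^ 4 * hr

theorem invariant_ring_eq_adjoin :
    {f : Cxy | act sigmaMat f = f ∧ act tauMat f = f}
      = (Algebra.adjoin ℂ ({W2q, psi5} : Set Cxy) : Subalgebra ℂ Cxy) := by
  have hgens : Algebra.adjoin ℂ ({W2q, psi5} : Set Cxy)
      = (Algebra.adjoin ℂ {X 0 * X 1, X 0 ^ 5 + X 1 ^ 5}).map (uvSubst : Cxy →ₐ[ℂ] Cxy) := by
    rw [AlgHom.map_adjoin, Set.image_pair, AlgEquiv.coe_toAlgHom, uvSubst_X_mul_X,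
      uvSubst_X_pow_add_X_pow, Algebra.adjoin_pair_smul_right _ _ (Ne.isUnit two_ne_zero)]
  ext f
  obtain ⟨g, rfl⟩ := uvSubst.surjective f
  rw [Set.mem_ofPred_eq, act_sigmaMat_uvSubst, act_tauMat_uvSubst, uvSubst.injective.eq_iff,
    uvSubst.injective.eq_iff, hgens, Subalgebra.coe_map, AlgEquiv.coe_toAlgHom,
    uvSubst.injective.mem_set_image, SetLike.mem_coe,
    mem_adjoin_iff_dihedral_invariant isPrimitiveRoot_zeta5 (by norm_num) two_ne_zero]
  constructor <;> rintro ⟨hσ, hτ⟩ <;> refine ⟨?_, hτ⟩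
  · rw [← swapVars_swapVars (diagScale _ _ g), hσ, hτ]
  · rw [hσ, hτ]

end
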